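/- Let d = ℝA ⋉_{D'} k be the semidirect product of ℝ with a Kähler flat Lie algebra (k, J', ⟨·,·⟩'), where D' is a skew-symmetric derivation of k commuting with J'. Define φ ∈ End(d) by φ(aA + x) = J'x, η(aA + x) = a, ξ = A, and extend the metric so A ⊥ k, |A| = 1. Then (⟨·,·⟩, φ, ξ, η) is an almost contact metric structure on d with dη = 0, dΦ = 0 (Φ(x,y) = ⟨φx, y⟩), and N_φ = 0; i.e., it is a coKähler structure. -/

import Mathlib

/-- The bracket of the semidirect product `d = ℝA ⋉_{D'} k`, written on
`ℝ × k`: `[(a,x),(b,y)] = (0, a D'y - b D'x + [x,y]_k)`. -/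
def sdBracket {k : Type*} [LieRing k] [LieAlgebra ℝ k] (D' : k →ₗ[ℝ] k) :
    (ℝ × k) → (ℝ × k) → (ℝ × k) :=
  fun u v => (0, u.1 • D' v.2 - v.1 • D' u.2 + ⁅u.2, v.2⁆)

/-- The endomorphism `φ(aA + x) = J'x` on `d = ℝA ⋉ k`. -/
def sdPhi {k : Type*} [LieRing k] [LieAlgebra ℝ k] (J' : k →ₗ[ℝ] k) :
    (ℝ × k) → (ℝ × k) :=
  fun u => (0, J' u.2)

/-- The product metric on `d = ℝA ⋉ k` with `A ⊥ k`, `|A| = 1`. -/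
def sdMetric {k : Type*} [LieRing k] [LieAlgebra ℝ k]
    (B' : k →ₗ[ℝ] k →ₗ[ℝ] ℝ) : (ℝ × k) → (ℝ × k) → ℝ :=
  fun u v => u.1 * v.1 + B' u.2 v.2

/-!
On `ℝA ⋉ k` the bracket takes values in `k`, so `dη = 0`, and `φ` kills `A` and is `J'` on `k`.
Expanding `dΦ` on `(aA + x, bA + y, cA + w)`, the `k`-part is `dω' = 0`, while each coefficient
of `a, b, c` vanishes because `J'D'` is `⟨·,·⟩'`-symmetric, being the product of two commuting
skew-adjoint operators. Expanding `N_φ`, all `D'`-terms cancel because `D'` commutes with `J'`,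
leaving `N_{J'} = 0`.
-/

section SemidirectCoKahler

variable {k : Type*} [LieRing k] [LieAlgebra ℝ k]

theorem skew_of_sq_eq_neg_of_compat (B' : k →ₗ[ℝ] k →ₗ[ℝ] ℝ) (J' : k →ₗ[ℝ] k)
    (hJ2 : ∀ x : k, J' (J' x) = -x) (hcompat : ∀ x y : k, B' (J' x) (J' y) = B' x y)
    (x y : k) : B' (J' x) y = -B' x (J' y) := by
  have h := hcompat x (J' y)
  rw [hJ2, map_neg] at h
  linarith

theorem symm_comp_of_skew_of_commute (B' : k →ₗ[ℝ] k →ₗ[ℝ] ℝ)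
    (hsymm : ∀ x y : k, B' x y = B' y x) (J' D' : k →ₗ[ℝ] k)
    (hJskew : ∀ x y : k, B' (J' x) y = -B' x (J' y))
    (hDskew : ∀ x y : k, B' (D' x) y = -B' x (D' y))
    (hDJ : ∀ x : k, D' (J' x) = J' (D' x)) (y w : k) :
    B' (J' (D' y)) w = B' (J' (D' w)) y :=
  calc B' (J' (D' y)) w = B' y (D' (J' w)) := by rw [hJskew, hDskew, neg_neg]
    _ = B' (J' (D' w)) y := by rw [hDJ, hsymm]

theorem sdPhi_sdPhi (J' : k →ₗ[ℝ] k) (hJ2 : ∀ x : k, J' (J' x) = -x) (u : ℝ × k) :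
    sdPhi J' (sdPhi J' u) = -u + u.1 • ((1 : ℝ), (0 : k)) := by
  ext <;> simp [sdPhi, hJ2]

theorem sdMetric_sdPhi_sdPhi (B' : k →ₗ[ℝ] k →ₗ[ℝ] ℝ) (J' : k →ₗ[ℝ] k)
    (hcompat : ∀ x y : k, B' (J' x) (J' y) = B' x y) (u v : ℝ × k) :
    sdMetric B' (sdPhi J' u) (sdPhi J' v) = sdMetric B' u v - u.1 * v.1 := by
  simp only [sdMetric, sdPhi, hcompat]
  ring

theorem sdMetric_sdPhi_sdBracket_cyclic (B' : k →ₗ[ℝ] k →ₗ[ℝ] ℝ) (J' D' : k →ₗ[ℝ] k)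
    (hdω' : ∀ x y w : k, B' (J' ⁅x, y⁆) w + B' (J' ⁅y, w⁆) x + B' (J' ⁅w, x⁆) y = 0)
    (hJD : ∀ y w : k, B' (J' (D' y)) w = B' (J' (D' w)) y) (u v s : ℝ × k) :
    sdMetric B' (sdPhi J' (sdBracket D' u v)) s
      + sdMetric B' (sdPhi J' (sdBracket D' v s)) u
      + sdMetric B' (sdPhi J' (sdBracket D' s u)) v = 0 := by
  obtain ⟨a, x⟩ := u
  obtain ⟨b, y⟩ := v
  obtain ⟨c, w⟩ := s
  simp only [sdBracket, sdPhi, sdMetric, map_add, map_sub, map_smul,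
    LinearMap.add_apply, LinearMap.sub_apply, LinearMap.smul_apply, smul_eq_mul]
  linear_combination hdω' x y w + a * hJD y w + b * hJD w x + c * hJD x y

theorem sdNijenhuis_eq_zero (J' D' : k →ₗ[ℝ] k) (hJ2 : ∀ x : k, J' (J' x) = -x)
    (hNJ' : ∀ x y : k, ⁅J' x, J' y⁆ - ⁅x, y⁆ - J' (⁅J' x, y⁆ + ⁅x, J' y⁆) = 0)
    (hDJ : ∀ x : k, D' (J' x) = J' (D' x)) (u v : ℝ × k) :
    sdBracket D' (sdPhi J' u) (sdPhi J' v)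
      + sdPhi J' (sdPhi J' (sdBracket D' u v))
      - sdPhi J' (sdBracket D' (sdPhi J' u) v + sdBracket D' u (sdPhi J' v)) = 0 := by
  obtain ⟨a, x⟩ := u
  obtain ⟨b, y⟩ := v
  have h := hNJ' x y
  simp only [sdBracket, sdPhi, Prod.mk_add_mk, Prod.mk_sub_mk, map_add, map_sub, map_smul,
    map_zero, hDJ, hJ2, zero_smul, smul_neg] at h ⊢
  refine Prod.ext (by norm_num) ?_
  simp only [Prod.snd_zero]
  linear_combination (norm := module) h

end SemidirectCoKahler

theorem semidirect_coKahler_general {k : Type*} [LieRing k] [LieAlgebra ℝ k]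
    (B' : k →ₗ[ℝ] k →ₗ[ℝ] ℝ)
    (hsymm : ∀ x y : k, B' x y = B' y x)
    (J' : k →ₗ[ℝ] k)
    (hJ2 : ∀ x : k, J' (J' x) = -x)
    (hcompat : ∀ x y : k, B' (J' x) (J' y) = B' x y)
    (hNJ' : ∀ x y : k, ⁅J' x, J' y⁆ - ⁅x, y⁆ - J' (⁅J' x, y⁆ + ⁅x, J' y⁆) = 0)
    (hdω' : ∀ x y w : k,
      B' (J' ⁅x, y⁆) w + B' (J' ⁅y, w⁆) x + B' (J' ⁅w, x⁆) y = 0)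
    (D' : k →ₗ[ℝ] k)
    (hDskew : ∀ x y : k, B' (D' x) y = - B' x (D' y))
    (hDJ : ∀ x : k, D' (J' x) = J' (D' x)) :
    -- η(ξ) = 1
    ((1 : ℝ), (0 : k)).1 = 1 ∧
    -- φ² = -Id + η ⊗ ξ
    (∀ u : ℝ × k, sdPhi J' (sdPhi J' u) = -u + u.1 • ((1 : ℝ), (0 : k))) ∧
    -- ⟨φu, φv⟩ = ⟨u,v⟩ - η(u)η(v)
    (∀ u v : ℝ × k,
      sdMetric B' (sdPhi J' u) (sdPhi J' v) = sdMetric B' u v - u.1 * v.1) ∧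
    -- dη = 0
    (∀ u v : ℝ × k, (sdBracket D' u v).1 = 0) ∧
    -- dΦ = 0, where Φ(u,v) = ⟨φu, v⟩
    (∀ u v s : ℝ × k,
      sdMetric B' (sdPhi J' (sdBracket D' u v)) s
        + sdMetric B' (sdPhi J' (sdBracket D' v s)) u
        + sdMetric B' (sdPhi J' (sdBracket D' s u)) v = 0) ∧
    -- N_φ = 0
    (∀ u v : ℝ × k,
      sdBracket D' (sdPhi J' u) (sdPhi J' v)
        + sdPhi J' (sdPhi J' (sdBracket D' u v))
        - sdPhi J' (sdBracket D' (sdPhi J' u) v + sdBracket D' u (sdPhi J' v))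
        = 0) := by
  have hJskew := skew_of_sq_eq_neg_of_compat B' J' hJ2 hcompat
  have hJD := symm_comp_of_skew_of_commute B' hsymm J' D' hJskew hDskew hDJ
  exact ⟨rfl, sdPhi_sdPhi J' hJ2, sdMetric_sdPhi_sdPhi B' J' hcompat, fun _ _ => rfl,
    sdMetric_sdPhi_sdBracket_cyclic B' J' D' hdω' hJD, sdNijenhuis_eq_zero J' D' hJ2 hNJ' hDJ⟩

/-- Let `d = ℝA ⋉_{D'} k` be the semidirect product of `ℝ` with a
Kähler flat Lie algebra `(k, J', ⟨·,·⟩')` by a skew-symmetric derivation `D'`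
commuting with `J'`. With `φ(aA+x) = J'x`, `η(aA+x) = a`, `ξ = A`, the tuple
`(⟨·,·⟩, φ, ξ, η)` is an almost contact metric structure with `dη = 0`,
`dΦ = 0` and `N_φ = 0`; i.e. it is a coKähler structure. -/
theorem semidirect_coKahler {k : Type*} [LieRing k] [LieAlgebra ℝ k]
    (B' : k →ₗ[ℝ] k →ₗ[ℝ] ℝ)
    (hsymm : ∀ x y : k, B' x y = B' y x)
    (hpos : ∀ x : k, x ≠ 0 → 0 < B' x x)
    (J' : k →ₗ[ℝ] k)
    (hJ2 : ∀ x : k, J' (J' x) = -x)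
    (hcompat : ∀ x y : k, B' (J' x) (J' y) = B' x y)
    (hNJ' : ∀ x y : k, ⁅J' x, J' y⁆ - ⁅x, y⁆ - J' (⁅J' x, y⁆ + ⁅x, J' y⁆) = 0)
    (hdω' : ∀ x y w : k,
      B' (J' ⁅x, y⁆) w + B' (J' ⁅y, w⁆) x + B' (J' ⁅w, x⁆) y = 0)
    (D' : k →ₗ[ℝ] k)
    (hder : ∀ x y : k, D' ⁅x, y⁆ = ⁅D' x, y⁆ + ⁅x, D' y⁆)
    (hDskew : ∀ x y : k, B' (D' x) y = - B' x (D' y))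
    (hDJ : ∀ x : k, D' (J' x) = J' (D' x)) :
    -- η(ξ) = 1
    ((1 : ℝ), (0 : k)).1 = 1 ∧
    -- φ² = -Id + η ⊗ ξ
    (∀ u : ℝ × k, sdPhi J' (sdPhi J' u) = -u + u.1 • ((1 : ℝ), (0 : k))) ∧
    -- ⟨φu, φv⟩ = ⟨u,v⟩ - η(u)η(v)
    (∀ u v : ℝ × k,
      sdMetric B' (sdPhi J' u) (sdPhi J' v) = sdMetric B' u v - u.1 * v.1) ∧
    -- dη = 0
    (∀ u v : ℝ × k, (sdBracket D' u v).1 = 0) ∧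
    -- dΦ = 0, where Φ(u,v) = ⟨φu, v⟩
    (∀ u v s : ℝ × k,
      sdMetric B' (sdPhi J' (sdBracket D' u v)) s
        + sdMetric B' (sdPhi J' (sdBracket D' v s)) u
        + sdMetric B' (sdPhi J' (sdBracket D' s u)) v = 0) ∧
    -- N_φ = 0
    (∀ u v : ℝ × k,
      sdBracket D' (sdPhi J' u) (sdPhi J' v)
        + sdPhi J' (sdPhi J' (sdBracket D' u v))
        - sdPhi J' (sdBracket D' (sdPhi J' u) v + sdBracket D' u (sdPhi J' v))
        = 0) :=
  semidirect_coKahler_general B' hsymm J' hJ2 hcompat hNJ' hdω' D' hDskew hDJ
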